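/- Let n ≥ 4, (λ, ξ) ∈ Λ = {(0,0), (1,0), (1,1), (2,0), (2,√3), (2,2)}, let ∇ be the bilinear map on 𝔤 satisfying the Koszul formula for ⟨·,·⟩_{λ,ξ}, let R(X,Y)Z := ∇_X(∇_YZ) − ∇_Y(∇_XZ) − ∇_{[X,Y]}Z, and let Ric(X) := Σ_{i=1}^{n} ε_i R(X, x'_i)x'_i. Then (𝔤, ⟨·,·⟩_{λ,ξ}) is an algebraic Ricci soliton: there exist c ∈ ℝ and a linear map D : ℝⁿ → ℝⁿ satisfying D[x, y] = [Dx, y] + [x, Dy] for all x, y ∈ ℝⁿ (a derivation of 𝔤) such that Ric = c·id + D. Moreover, if (λ, ξ) ≠ (1, 0), then (𝔤, ⟨·,·⟩_{λ,ξ}) is not Einstein: there is no c ∈ ℝ with Ric = c·id. -/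

import Mathlib

open Matrix

noncomputable section

/-- The Lie bracket of `𝔥₃ ⊕ ℝ^{n-3}` on `ℝⁿ`: `[x, y] = (x₁y₂ - x₂y₁) • eₙ`. -/
def bral (n : ℕ) (hn : 4 ≤ n) (x y : Fin n → ℝ) : Fin n → ℝ :=
  (x ⟨0, by omega⟩ * y ⟨1, by omega⟩ - x ⟨1, by omega⟩ * y ⟨0, by omega⟩) •
    (Pi.single (⟨n - 1, by omega⟩ : Fin n) (1 : ℝ) : Fin n → ℝ)

/-- The matrix `I_{n-1,1} = diag(1, …, 1, -1)`. -/
def Inm (n : ℕ) : Matrix (Fin n) (Fin n) ℝ :=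
  Matrix.diagonal fun i => if (i : ℕ) < n - 1 then 1 else -1

/-- `ε_i = 1` for `i ≤ n-1` (1-based), `ε_n = -1`. -/
def eps (n : ℕ) (i : Fin n) : ℝ := if (i : ℕ) < n - 1 then 1 else -1

/-- The canonical inner product of signature `(n-1,1)`: `⟨x,y⟩₀ = xᵀ I_{n-1,1} y`. -/
def ip0 (n : ℕ) (x y : Fin n → ℝ) : ℝ := ∑ i : Fin n, eps n i * x i * y i

/-- The indefinite orthogonal group `O(n-1,1)`. -/
def Oset (n : ℕ) : Set (Matrix (Fin n) (Fin n) ℝ) := {k | kᵀ * Inm n * k = Inm n}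

/-- The group `ℝ^× · Aut(𝔥₃ ⊕ ℝ^{n-3})`: invertible block lower triangular matrices
with diagonal blocks of sizes `(2, n-3, 1)`. -/
def Hset (n : ℕ) : Set (Matrix (Fin n) (Fin n) ℝ) :=
  {A | IsUnit A.det ∧ ∀ i j : Fin n,
    ((i : ℕ) < 2 ∧ 2 ≤ (j : ℕ)) ∨ ((i : ℕ) < n - 1 ∧ (j : ℕ) = n - 1) → A i j = 0}

/-- `H' = {hᵀ : h ∈ H}`. -/
def Hset' (n : ℕ) : Set (Matrix (Fin n) (Fin n) ℝ) := {A | Aᵀ ∈ Hset n}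

/-- `G_λ`: invertible matrices with last column `eₙ` and last row `(-λ, 0, …, 0, 1)`. -/
def Glam (n : ℕ) (hn : 4 ≤ n) (lam : ℝ) : Set (Matrix (Fin n) (Fin n) ℝ) :=
  {g | IsUnit g.det ∧
    (∀ i : Fin n, g i ⟨n - 1, by omega⟩ = if (i : ℕ) = n - 1 then 1 else 0) ∧
    (∀ j : Fin n, g ⟨n - 1, by omega⟩ j =
      if (j : ℕ) = n - 1 then 1 else if (j : ℕ) = 0 then -lam else 0)}

/-- The matrix `g_{λ,ξ}`: the identity except that the `(1, n-1)` entry is `ξ` and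
the `(1, n)` entry is `λ`. -/
def gmat (n : ℕ) (hn : 4 ≤ n) (lam xi : ℝ) : Matrix (Fin n) (Fin n) ℝ :=
  1 + Matrix.single ⟨0, by omega⟩ ⟨n - 2, by omega⟩ xi
    + Matrix.single ⟨0, by omega⟩ ⟨n - 1, by omega⟩ lam

/-- The inner product `⟨x,y⟩_{λ,ξ} = ⟨g_{λ,ξ}⁻¹x, g_{λ,ξ}⁻¹y⟩₀`. -/
def ipg (n : ℕ) (hn : 4 ≤ n) (lam xi : ℝ) (x y : Fin n → ℝ) : ℝ :=
  ip0 n ((gmat n hn lam xi)⁻¹.mulVec x) ((gmat n hn lam xi)⁻¹.mulVec y)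

/-- `x'_i = g_{λ,ξ} e_i`. -/
def xvec (n : ℕ) (hn : 4 ≤ n) (lam xi : ℝ) (i : Fin n) : Fin n → ℝ :=
  (gmat n hn lam xi).mulVec (Pi.single i 1)

/-- The parameter set `Λ = {(0,0), (1,0), (1,1), (2,0), (2,√3), (2,2)}`. -/
def Lam : Set (ℝ × ℝ) :=
  {(0, 0), (1, 0), (1, 1), (2, 0), (2, Real.sqrt 3), (2, 2)}

/-!
Since `g_{λ,ξ}⁻¹ x = x - (ξ xₙ₋₁ + λ xₙ) e₁`, the metric is
`⟨x, y⟩_{λ,ξ} = ⟨x, y⟩₀ + α(x) α(y) - x₁ y₁` with `α = ⟨·, e₁⟩_{λ,ξ}`, and the whole geometry lives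
in the coordinates `1, 2, n - 1, n`: solving the Koszul formula gives the Levi-Civita connection in
closed form, it vanishes when either argument lies in `span (e₃, …, eₙ₋₂)`, and the Ricci operator
becomes an explicit matrix supported on those four coordinates. It acts by
`κ = (1 - λ²)(1 + ξ² - λ²)/2` on `e₁, e₂` and by `-κ` on `eₙ`, so `Ric - 3κ·id` is a derivation.
An Einstein metric forces `κ = 0` and the off-diagonal entries `ξ(1 - λ²)/2`, `-λ(1 - λ² + ξ²/2)` to
vanish, which on `Λ` happens only at `(1, 0)`.
-/

section SignatureForm

variable {n : ℕ}

lemma eps_ne_zero (j : Fin n) : eps n j ≠ 0 := by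
  unfold eps; split_ifs <;> norm_num

lemma ip0_comm (x y : Fin n → ℝ) : ip0 n x y = ip0 n y x := by
  simp only [ip0, mul_right_comm]

lemma ip0_add_left (x y z : Fin n → ℝ) : ip0 n (x + y) z = ip0 n x z + ip0 n y z := by
  simp only [ip0, Pi.add_apply, mul_add, add_mul, Finset.sum_add_distrib]

lemma ip0_add_right (x y z : Fin n → ℝ) : ip0 n x (y + z) = ip0 n x y + ip0 n x z := by
  rw [ip0_comm, ip0_add_left, ip0_comm y, ip0_comm z]

lemma ip0_sub_left (x y z : Fin n → ℝ) : ip0 n (x - y) z = ip0 n x z - ip0 n y z := by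
  simp only [ip0, Pi.sub_apply, mul_sub, sub_mul, Finset.sum_sub_distrib]

lemma ip0_single_left (j : Fin n) (c : ℝ) (y : Fin n → ℝ) :
    ip0 n (Pi.single j c) y = eps n j * c * y j := by
  rw [ip0, Finset.sum_eq_single j (fun i _ hi => by simp [hi]) (by simp)]
  simp

lemma ip0_single_right (x : Fin n → ℝ) (j : Fin n) (c : ℝ) :
    ip0 n x (Pi.single j c) = eps n j * x j * c := by
  rw [ip0_comm, ip0_single_left]; ring

lemma eq_zero_of_forall_ip0_eq_zero {u : Fin n → ℝ} (hu : ∀ w, ip0 n u w = 0) : u = 0 := by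
  funext j
  have := hu (Pi.single j 1)
  rw [ip0_single_right, mul_one] at this
  simpa [eps_ne_zero] using this

end SignatureForm

namespace H3Lorentz

variable {n : ℕ} (hn : 4 ≤ n)

-- The paper's coordinates `1, 2, n - 1, n` (elements of `Fin n` are numbered from `0`).
def i₁ : Fin n := ⟨0, by omega⟩
def i₂ : Fin n := ⟨1, by omega⟩
def iₘ : Fin n := ⟨n - 2, by omega⟩
def iₙ : Fin n := ⟨n - 1, by omega⟩

def ofCoords (a b c d : ℝ) : Fin n → ℝ :=
  Pi.single (i₁ hn) a + Pi.single (i₂ hn) b + Pi.single (iₘ hn) c + Pi.single (iₙ hn) d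

variable {hn}

lemma i₂_ne_i₁ : i₂ hn ≠ i₁ hn := by simp [i₁, i₂]
lemma iₘ_ne_i₁ : iₘ hn ≠ i₁ hn := by simp [i₁, iₘ]; omega
lemma iₙ_ne_i₁ : iₙ hn ≠ i₁ hn := by simp [i₁, iₙ]; omega
lemma iₘ_ne_i₂ : iₘ hn ≠ i₂ hn := by simp [i₂, iₘ]; omega
lemma iₙ_ne_i₂ : iₙ hn ≠ i₂ hn := by simp [i₂, iₙ]; omega
lemma iₙ_ne_iₘ : iₙ hn ≠ iₘ hn := by simp [iₘ, iₙ]; omega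

lemma eps_i₁ : eps n (i₁ hn) = 1 := if_pos (by simp [i₁]; omega)
lemma eps_i₂ : eps n (i₂ hn) = 1 := if_pos (by simp [i₂]; omega)
lemma eps_iₘ : eps n (iₘ hn) = 1 := if_pos (by simp [iₘ]; omega)
lemma eps_iₙ : eps n (iₙ hn) = -1 := if_neg (by simp [iₙ])

section OfCoords

variable (a b c d : ℝ)

@[simp] lemma ofCoords_apply_i₁ : ofCoords hn a b c d (i₁ hn) = a := by
  simp [ofCoords, i₂_ne_i₁.symm, iₘ_ne_i₁.symm, iₙ_ne_i₁.symm]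

@[simp] lemma ofCoords_apply_i₂ : ofCoords hn a b c d (i₂ hn) = b := by
  simp [ofCoords, i₂_ne_i₁, iₘ_ne_i₂.symm, iₙ_ne_i₂.symm]

@[simp] lemma ofCoords_apply_iₘ : ofCoords hn a b c d (iₘ hn) = c := by
  simp [ofCoords, iₘ_ne_i₁, iₘ_ne_i₂, iₙ_ne_iₘ.symm]

@[simp] lemma ofCoords_apply_iₙ : ofCoords hn a b c d (iₙ hn) = d := by
  simp [ofCoords, iₙ_ne_i₁, iₙ_ne_i₂, iₙ_ne_iₘ]

lemma ofCoords_add (a' b' c' d' : ℝ) :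
    ofCoords hn a b c d + ofCoords hn a' b' c' d'
      = ofCoords hn (a + a') (b + b') (c + c') (d + d') := by
  simp only [ofCoords, Pi.single_add]; abel

lemma ofCoords_sub (a' b' c' d' : ℝ) :
    ofCoords hn a b c d - ofCoords hn a' b' c' d'
      = ofCoords hn (a - a') (b - b') (c - c') (d - d') := by
  simp only [ofCoords, Pi.single_sub]; abel

lemma smul_ofCoords (r : ℝ) :
    r • ofCoords hn a b c d = ofCoords hn (r * a) (r * b) (r * c) (r * d) := by
  simp only [ofCoords, smul_add, ← smul_eq_mul, Pi.single_smul]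

lemma ofCoords_zero : ofCoords hn 0 0 0 0 = (0 : Fin n → ℝ) := by
  simp [ofCoords]

lemma ip0_ofCoords_left (z : Fin n → ℝ) :
    ip0 n (ofCoords hn a b c d) z
      = a * z (i₁ hn) + b * z (i₂ hn) + c * z (iₘ hn) - d * z (iₙ hn) := by
  simp only [ofCoords, ip0_add_left, ip0_single_left, eps_i₁, eps_i₂, eps_iₘ, eps_iₙ]
  ring

end OfCoords

lemma bral_eq_ofCoords (X Y : Fin n → ℝ) :
    bral n hn X Y = ofCoords hn 0 0 0 (X (i₁ hn) * Y (i₂ hn) - X (i₂ hn) * Y (i₁ hn)) := by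
  simp [bral, ofCoords, ← Pi.single_smul, i₁, i₂, iₙ]

section GMatrix

variable (lam xi : ℝ)

lemma gmat_mulVec (x : Fin n → ℝ) :
    gmat n hn lam xi *ᵥ x = x + Pi.single (i₁ hn) (xi * x (iₘ hn) + lam * x (iₙ hn)) := by
  rw [gmat, add_mulVec, add_mulVec, one_mulVec, single_mulVec, single_mulVec, Pi.single_add,
    add_assoc]
  rfl

lemma gmat_neg_mulVec_gmat_mulVec (x : Fin n → ℝ) :
    gmat n hn (-lam) (-xi) *ᵥ (gmat n hn lam xi *ᵥ x) = x := by
  simp [gmat_mulVec, iₘ_ne_i₁, iₙ_ne_i₁, add_assoc, ← Pi.single_add]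

lemma gmat_inv : (gmat n hn lam xi)⁻¹ = gmat n hn (-lam) (-xi) :=
  inv_eq_left_inv <| ext_of_mulVec_single fun j => by
    rw [← mulVec_mulVec, gmat_neg_mulVec_gmat_mulVec, one_mulVec]

end GMatrix

section Metric

variable (hn) (lam xi : ℝ)

def innerE₁ (x : Fin n → ℝ) : ℝ := x (i₁ hn) - xi * x (iₘ hn) - lam * x (iₙ hn)

def innerEₙ (x : Fin n → ℝ) : ℝ := -lam * innerE₁ hn lam xi x - x (iₙ hn)

variable {hn lam xi}

lemma ipg_eq_ip0_add (x y : Fin n → ℝ) :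
    ipg n hn lam xi x y
      = ip0 n x y + innerE₁ hn lam xi x * innerE₁ hn lam xi y - x (i₁ hn) * y (i₁ hn) := by
  simp only [ipg, gmat_inv, gmat_mulVec, ip0_add_left, ip0_add_right, ip0_single_left,
    ip0_single_right, Pi.add_apply, Pi.single_eq_same, eps_i₁, innerE₁]
  ring

lemma ipg_sub_left (x y z : Fin n → ℝ) :
    ipg n hn lam xi (x - y) z = ipg n hn lam xi x z - ipg n hn lam xi y z := by
  rw [ipg, mulVec_sub, ip0_sub_left, ipg, ipg]

lemma eq_of_forall_ipg_eq {x y : Fin n → ℝ}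
    (h : ∀ z, ipg n hn lam xi x z = ipg n hn lam xi y z) : x = y := by
  have hu : ∀ w, ip0 n ((gmat n hn lam xi)⁻¹ *ᵥ (x - y)) w = 0 := fun w => by
    have := ipg_sub_left (hn := hn) (lam := lam) (xi := xi) x y (gmat n hn lam xi *ᵥ w)
    rwa [h, sub_self, ipg, gmat_inv, gmat_neg_mulVec_gmat_mulVec, ← gmat_inv] at this
  have hinv : gmat n hn lam xi *ᵥ ((gmat n hn lam xi)⁻¹ *ᵥ (x - y)) = x - y := by
    simpa [gmat_inv] using gmat_neg_mulVec_gmat_mulVec (hn := hn) (-lam) (-xi) (x - y)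
  rw [eq_zero_of_forall_ip0_eq_zero hu, mulVec_zero] at hinv
  exact sub_eq_zero.mp hinv.symm

lemma ipg_ofCoords_left (a b c d : ℝ) (z : Fin n → ℝ) :
    ipg n hn lam xi (ofCoords hn a b c d) z
      = b * z (i₂ hn) + c * z (iₘ hn) - d * z (iₙ hn)
        + (a - xi * c - lam * d) * innerE₁ hn lam xi z := by
  rw [ipg_eq_ip0_add, ip0_ofCoords_left]
  simp only [innerE₁, ofCoords_apply_i₁, ofCoords_apply_iₘ, ofCoords_apply_iₙ]
  ring

end Metric

section LeviCivita

variable (hn) (lam xi : ℝ)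

/- With `ω(X, Y) = X₁Y₂ - X₂Y₁` and `φ = innerEₙ = ⟨·, eₙ⟩_{λ,ξ}`, the Koszul formula reads
`2⟨∇_X Y, Z⟩ = ω(X, Y) φ(Z) + (φ(X)Y₂ + φ(Y)X₂) Z₁ - (φ(X)Y₁ + φ(Y)X₁) Z₂`, and
`(1 + ξ² - λ²) e₁ + ξ eₙ₋₁ - λ eₙ` and `e₂` are the `⟨·,·⟩_{λ,ξ}`-duals of `Z₁` and `Z₂`. -/
def leviCivita (X Y : Fin n → ℝ) : Fin n → ℝ :=
  (1 / 2 : ℝ) • bral n hn X Y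
    + ((innerEₙ hn lam xi X * Y (i₂ hn) + innerEₙ hn lam xi Y * X (i₂ hn)) / 2)
        • ofCoords hn (1 + xi ^ 2 - lam ^ 2) 0 xi (-lam)
    - ((innerEₙ hn lam xi X * Y (i₁ hn) + innerEₙ hn lam xi Y * X (i₁ hn)) / 2)
        • ofCoords hn 0 1 0 0

variable {hn lam xi}

lemma leviCivita_eq_ofCoords (X Y : Fin n → ℝ) :
    leviCivita hn lam xi X Y = ofCoords hn
      ((innerEₙ hn lam xi X * Y (i₂ hn) + innerEₙ hn lam xi Y * X (i₂ hn)) / 2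
        * (1 + xi ^ 2 - lam ^ 2))
      (-((innerEₙ hn lam xi X * Y (i₁ hn) + innerEₙ hn lam xi Y * X (i₁ hn)) / 2))
      ((innerEₙ hn lam xi X * Y (i₂ hn) + innerEₙ hn lam xi Y * X (i₂ hn)) / 2 * xi)
      ((X (i₁ hn) * Y (i₂ hn) - X (i₂ hn) * Y (i₁ hn)) / 2
        - (innerEₙ hn lam xi X * Y (i₂ hn) + innerEₙ hn lam xi Y * X (i₂ hn)) / 2 * lam) := by
  rw [leviCivita, bral_eq_ofCoords, smul_ofCoords, smul_ofCoords, smul_ofCoords, ofCoords_add,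
    ofCoords_sub]
  congr 1 <;> ring

lemma leviCivita_koszul (X Y Z : Fin n → ℝ) :
    2 * ipg n hn lam xi (leviCivita hn lam xi X Y) Z
      = ipg n hn lam xi (bral n hn X Y) Z - ipg n hn lam xi (bral n hn Y Z) X
        + ipg n hn lam xi (bral n hn Z X) Y := by
  simp only [leviCivita_eq_ofCoords, bral_eq_ofCoords, ipg_ofCoords_left, innerEₙ, innerE₁]
  ring

lemma eq_leviCivita_of_koszul (nab : (Fin n → ℝ) → (Fin n → ℝ) → (Fin n → ℝ))
    (hK : ∀ X Y Z : Fin n → ℝ,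
      2 * ipg n hn lam xi (nab X Y) Z
        = ipg n hn lam xi (bral n hn X Y) Z - ipg n hn lam xi (bral n hn Y Z) X
          + ipg n hn lam xi (bral n hn Z X) Y)
    (X Y : Fin n → ℝ) : nab X Y = leviCivita hn lam xi X Y := by
  refine eq_of_forall_ipg_eq (hn := hn) (lam := lam) (xi := xi) fun Z => ?_
  linarith [hK X Y Z, leviCivita_koszul (hn := hn) (lam := lam) (xi := xi) X Y Z]

end LeviCivita

section Ricci

variable (hn) (lam xi : ℝ)

def curvature (X Y Z : Fin n → ℝ) : Fin n → ℝ :=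
  leviCivita hn lam xi X (leviCivita hn lam xi Y Z)
    - leviCivita hn lam xi Y (leviCivita hn lam xi X Z)
    - leviCivita hn lam xi (bral n hn X Y) Z

def ricciConst : ℝ := (1 - lam ^ 2) * (1 + xi ^ 2 - lam ^ 2) / 2

def ricciOp : (Fin n → ℝ) →ₗ[ℝ] (Fin n → ℝ) where
  toFun v := ofCoords hn (ricciConst lam xi * v (i₁ hn)) (ricciConst lam xi * v (i₂ hn))
    (xi * (1 - lam ^ 2) / 2 * v (i₁ hn))
    (-(lam * (1 - lam ^ 2 + xi ^ 2 / 2)) * v (i₁ hn)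
      + lam * xi * (1 + xi ^ 2 - lam ^ 2) / 2 * v (iₘ hn) - ricciConst lam xi * v (iₙ hn))
  map_add' u v := by
    simp only [Pi.add_apply, ofCoords_add]
    congr 1 <;> ring
  map_smul' r v := by
    simp only [Pi.smul_apply, smul_eq_mul, RingHom.id_apply, smul_ofCoords]
    congr 1 <;> ring

variable {hn lam xi}

lemma ricciOp_apply (v : Fin n → ℝ) :
    ricciOp hn lam xi v = ofCoords hn
      (ricciConst lam xi * v (i₁ hn)) (ricciConst lam xi * v (i₂ hn))
      (xi * (1 - lam ^ 2) / 2 * v (i₁ hn))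
      (-(lam * (1 - lam ^ 2 + xi ^ 2 / 2)) * v (i₁ hn)
        + lam * xi * (1 + xi ^ 2 - lam ^ 2) / 2 * v (iₘ hn) - ricciConst lam xi * v (iₙ hn)) :=
  rfl

lemma xvec_eq_single {j : Fin n} (hjₘ : j ≠ iₘ hn) (hjₙ : j ≠ iₙ hn) :
    xvec n hn lam xi j = Pi.single j 1 := by
  rw [xvec, gmat_mulVec]
  simp [hjₘ.symm, hjₙ.symm]

lemma xvec_iₘ : xvec n hn lam xi (iₘ hn) = ofCoords hn xi 0 1 0 := by
  rw [xvec, gmat_mulVec]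
  simp [iₙ_ne_iₘ, ofCoords]
  abel

lemma xvec_iₙ : xvec n hn lam xi (iₙ hn) = ofCoords hn lam 0 0 1 := by
  rw [xvec, gmat_mulVec]
  simp [iₙ_ne_iₘ.symm, ofCoords]
  abel

lemma single_i₁_eq_ofCoords : Pi.single (i₁ hn) 1 = ofCoords hn 1 0 0 0 := by
  simp [ofCoords]

lemma single_i₂_eq_ofCoords : Pi.single (i₂ hn) 1 = ofCoords hn 0 1 0 0 := by
  simp [ofCoords]

lemma curvature_single_single {j : Fin n} (hj₁ : j ≠ i₁ hn) (hj₂ : j ≠ i₂ hn)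
    (hjₘ : j ≠ iₘ hn) (hjₙ : j ≠ iₙ hn) (X : Fin n → ℝ) :
    curvature hn lam xi X (Pi.single j 1) (Pi.single j 1) = 0 := by
  simp [curvature, leviCivita_eq_ofCoords, bral_eq_ofCoords, innerEₙ, innerE₁, hj₁.symm,
    hj₂.symm, hjₘ.symm, hjₙ.symm, ofCoords_zero]

lemma sum_eps_smul_curvature_xvec (v : Fin n → ℝ) :
    ∑ j, eps n j • curvature hn lam xi v (xvec n hn lam xi j) (xvec n hn lam xi j)
      = ricciOp hn lam xi v := by
  rw [← Finset.sum_subset (Finset.subset_univ {i₁ hn, i₂ hn, iₘ hn, iₙ hn}) ?_]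
  · rw [Finset.sum_insert (by simp [i₂_ne_i₁.symm, iₘ_ne_i₁.symm, iₙ_ne_i₁.symm]),
      Finset.sum_insert (by simp [iₘ_ne_i₂.symm, iₙ_ne_i₂.symm]),
      Finset.sum_insert (by simp [iₙ_ne_iₘ.symm]), Finset.sum_singleton,
      xvec_eq_single iₘ_ne_i₁.symm iₙ_ne_i₁.symm, xvec_eq_single iₘ_ne_i₂.symm iₙ_ne_i₂.symm,
      xvec_iₘ, xvec_iₙ, single_i₁_eq_ofCoords, single_i₂_eq_ofCoords]
    simp only [curvature, leviCivita_eq_ofCoords, bral_eq_ofCoords, ofCoords_apply_i₁,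
      ofCoords_apply_i₂, ofCoords_apply_iₘ, ofCoords_apply_iₙ, ofCoords_sub, smul_ofCoords,
      ofCoords_add, eps_i₁, eps_i₂, eps_iₘ, eps_iₙ, innerEₙ, innerE₁, ricciOp_apply, ricciConst]
    congr 1 <;> ring
  · intro j _ hj
    simp only [Finset.mem_insert, Finset.mem_singleton, not_or] at hj
    obtain ⟨hj₁, hj₂, hjₘ, hjₙ⟩ := hj
    rw [xvec_eq_single hjₘ hjₙ, curvature_single_single hj₁ hj₂ hjₘ hjₙ, smul_zero]

end Ricci

section Soliton

variable (hn) (lam xi : ℝ)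

/- On `e₁, e₂, eₙ` the Ricci operator has diagonal entries `κ, κ, -κ` (`κ = ricciConst`), and a
derivation needs `d₁ + d₂ = dₙ` there, so `2(κ - c) = -κ - c` forces `c = 3κ`. -/
def solitonDerivation : (Fin n → ℝ) →ₗ[ℝ] (Fin n → ℝ) :=
  ricciOp hn lam xi - (3 * ricciConst lam xi) • LinearMap.id

variable {hn lam xi}

lemma solitonDerivation_bral (x y : Fin n → ℝ) :
    solitonDerivation hn lam xi (bral n hn x y)
      = bral n hn (solitonDerivation hn lam xi x) y
        + bral n hn x (solitonDerivation hn lam xi y) := by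
  simp only [solitonDerivation, LinearMap.sub_apply, LinearMap.smul_apply, LinearMap.id_apply,
    ricciOp_apply, bral_eq_ofCoords, smul_ofCoords, ofCoords_sub, ofCoords_add, Pi.sub_apply,
    Pi.smul_apply, smul_eq_mul, ofCoords_apply_i₁, ofCoords_apply_i₂, ofCoords_apply_iₘ,
    ofCoords_apply_iₙ]
  congr 1 <;> ring

lemma ricciOp_eq_smul_add_solitonDerivation (v : Fin n → ℝ) :
    ricciOp hn lam xi v = (3 * ricciConst lam xi) • v + solitonDerivation hn lam xi v := by
  simp [solitonDerivation]

lemma ricci_coeffs_eq_zero_of_ricciOp_eq_smul {c : ℝ} (h : ∀ v, ricciOp hn lam xi v = c • v) :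
    ricciConst lam xi = 0 ∧ xi * (1 - lam ^ 2) = 0 ∧ lam * (1 - lam ^ 2 + xi ^ 2 / 2) = 0 := by
  have h₂ := congrFun (h (Pi.single (i₂ hn) 1)) (i₂ hn)
  have hₙ := congrFun (h (Pi.single (iₙ hn) 1)) (iₙ hn)
  have hₘ := congrFun (h (Pi.single (i₁ hn) 1)) (iₘ hn)
  have hₙ₁ := congrFun (h (Pi.single (i₁ hn) 1)) (iₙ hn)
  simp only [ricciOp_apply, ofCoords_apply_i₂, ofCoords_apply_iₘ, ofCoords_apply_iₙ,
    Pi.smul_apply, smul_eq_mul, Pi.single_eq_same, Pi.single_eq_of_ne i₂_ne_i₁,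
    Pi.single_eq_of_ne iₘ_ne_i₁, Pi.single_eq_of_ne iₙ_ne_i₁, Pi.single_eq_of_ne iₘ_ne_i₂,
    Pi.single_eq_of_ne iₙ_ne_i₂, Pi.single_eq_of_ne iₙ_ne_iₘ.symm,
    Pi.single_eq_of_ne iₙ_ne_i₁.symm] at h₂ hₙ hₘ hₙ₁
  exact ⟨by linarith, by linarith, by linarith⟩

end Soliton

lemma eq_one_zero_of_mem_Lam {lam xi : ℝ} (hmem : (lam, xi) ∈ Lam)
    (hconst : ricciConst lam xi = 0) (hxi : xi * (1 - lam ^ 2) = 0)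
    (hlam : lam * (1 - lam ^ 2 + xi ^ 2 / 2) = 0) :
    (lam, xi) = (1, 0) := by
  simp only [Lam, Set.mem_insert_iff, Set.mem_singleton_iff, Prod.mk.injEq] at hmem
  revert hconst hxi hlam
  rcases hmem with ⟨rfl, rfl⟩ | ⟨rfl, rfl⟩ | ⟨rfl, rfl⟩ | ⟨rfl, rfl⟩ | ⟨rfl, rfl⟩ | ⟨rfl, rfl⟩ <;>
    norm_num [ricciConst]

end H3Lorentz

open H3Lorentz in
/-- for every `(λ,ξ) ∈ Λ`, `(𝔤, ⟨·,·⟩_{λ,ξ})` is an algebraic Ricci soliton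
(`Ric = c·id + D` for a derivation `D`), and for `(λ,ξ) ≠ (1,0)` it is not Einstein. -/
theorem stmt17 (n : ℕ) (hn : 4 ≤ n) (lam xi : ℝ) (hmem : (lam, xi) ∈ Lam)
    (nab : (Fin n → ℝ) →ₗ[ℝ] (Fin n → ℝ) →ₗ[ℝ] (Fin n → ℝ))
    (hK : ∀ X Y Z : Fin n → ℝ,
      2 * ipg n hn lam xi (nab X Y) Z
        = ipg n hn lam xi (bral n hn X Y) Z - ipg n hn lam xi (bral n hn Y Z) X
          + ipg n hn lam xi (bral n hn Z X) Y)
    (R : (Fin n → ℝ) → (Fin n → ℝ) → (Fin n → ℝ) → (Fin n → ℝ))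
    (hR : ∀ X Y Z : Fin n → ℝ,
      R X Y Z = nab X (nab Y Z) - nab Y (nab X Z) - nab (bral n hn X Y) Z)
    (Ric : (Fin n → ℝ) → (Fin n → ℝ))
    (hRic : ∀ X : Fin n → ℝ,
      Ric X = ∑ i : Fin n, eps n i • R X (xvec n hn lam xi i) (xvec n hn lam xi i)) :
    (∃ c : ℝ, ∃ D : (Fin n → ℝ) →ₗ[ℝ] (Fin n → ℝ),
      (∀ x y : Fin n → ℝ, D (bral n hn x y) = bral n hn (D x) y + bral n hn x (D y)) ∧
      ∀ v : Fin n → ℝ, Ric v = c • v + D v) ∧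
    ((lam, xi) ≠ (1, 0) → ¬∃ c : ℝ, ∀ v : Fin n → ℝ, Ric v = c • v) := by
  have hnab := eq_leviCivita_of_koszul (fun X Y => nab X Y) hK
  have hRic_eq : ∀ v, Ric v = ricciOp hn lam xi v := fun v => by
    simp only [hRic, hR, hnab, ← sum_eps_smul_curvature_xvec, curvature]
  refine ⟨⟨3 * ricciConst lam xi, solitonDerivation hn lam xi, solitonDerivation_bral,
    fun v => by rw [hRic_eq, ricciOp_eq_smul_add_solitonDerivation]⟩, ?_⟩
  rintro hne ⟨c, hc⟩
  obtain ⟨hconst, hxi, hlam⟩ :=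
    ricci_coeffs_eq_zero_of_ricciOp_eq_smul fun v => (hRic_eq v).symm.trans (hc v)
  exact hne (eq_one_zero_of_mem_Lam hmem hconst hxi hlam)
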